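/- Let Σ = (o^{n_1} → o) × ⋯ × (o^{n_l} → o). Every parametric family ρ of type Σ → o has all components λ-definable: for every finite set Q there exists a closed simply typed λ-term M : Σ → o with ρ_Q = ⟦M⟧_Q. -/

import Mathlib

/-- Simple types over one base type `o`, with products and unit. -/
inductive Ty : Type
  | o : Ty
  | arr : Ty → Ty → Ty
  | prod : Ty → Ty → Ty
  | unit : Ty

/-- Set-theoretic semantics of simple types, with base type interpreted as `Q`. -/
def sem (Q : Type) : Ty → Type
  | .o => Q
  | .arr A B => sem Q A → sem Q B
  | .prod A B => sem Q A × sem Q B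
  | .unit => PUnit

/-- Typed de Bruijn variables. -/
inductive Var : List Ty → Ty → Type
  | vz {Γ A} : Var (A :: Γ) A
  | vs {Γ A B} : Var Γ A → Var (B :: Γ) A

/-- Intrinsically typed terms of the simply typed λ-calculus with products. -/
inductive Tm : List Ty → Ty → Type
  | var {Γ A} : Var Γ A → Tm Γ A
  | lam {Γ A B} : Tm (A :: Γ) B → Tm Γ (.arr A B)
  | app {Γ A B} : Tm Γ (.arr A B) → Tm Γ A → Tm Γ B
  | pair {Γ A B} : Tm Γ A → Tm Γ B → Tm Γ (.prod A B)
  | fst {Γ A B} : Tm Γ (.prod A B) → Tm Γ A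
  | snd {Γ A B} : Tm Γ (.prod A B) → Tm Γ B
  | star {Γ} : Tm Γ .unit

/-- Semantics of contexts. -/
def semCtx (Q : Type) : List Ty → Type
  | [] => PUnit
  | A :: Γ => sem Q A × semCtx Q Γ

/-- Semantics of variables. -/
def evalVar (Q : Type) : {Γ : List Ty} → {A : Ty} → Var Γ A → semCtx Q Γ → sem Q A
  | _, _, .vz, ρ => ρ.1
  | _, _, .vs x, ρ => evalVar Q x ρ.2

/-- Semantics of terms. -/
def eval (Q : Type) : {Γ : List Ty} → {A : Ty} → Tm Γ A → semCtx Q Γ → sem Q A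
  | _, _, .var x, ρ => evalVar Q x ρ
  | _, _, .lam M, ρ => fun a => eval Q M (a, ρ)
  | _, _, .app M N, ρ => eval Q M ρ (eval Q N ρ)
  | _, _, .pair M N, ρ => (eval Q M ρ, eval Q N ρ)
  | _, _, .fst M, ρ => (eval Q M ρ).1
  | _, _, .snd M, ρ => (eval Q M ρ).2
  | _, _, .star, _ => PUnit.unit

/-- Semantics `⟦M⟧_Q` of a closed term `M`. -/
def ev0 (Q : Type) {A : Ty} (M : Tm [] A) : sem Q A := eval Q M PUnit.unit

/-- The logical relation `⟦A⟧_R` induced by a relation `R ⊆ Q × Q'`. -/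
def rel {Q Q' : Type} (R : Q → Q' → Prop) : (A : Ty) → sem Q A → sem Q' A → Prop
  | .o, a, b => R a b
  | .arr A B, f, g => ∀ x y, rel R A x y → rel R B (f x) (g y)
  | .prod A B, p, q => rel R A p.1 q.1 ∧ rel R B p.2 q.2
  | .unit, _, _ => True

/-- The type `o^n → o` (curried). -/
def onArr : ℕ → Ty
  | 0 => .o
  | n + 1 => .arr .o (onArr n)

/-- The type `Σ = (o^{n_1} → o) × ⋯ × (o^{n_l} → o)` of a ranked alphabet. -/
def SigTy : List ℕ → Ty
  | [] => .unit
  | n :: ns => .prod (onArr n) (SigTy ns)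

/-- Currying: `((Fin n → Q) → Q) → ⟦o^n → o⟧_Q`. -/
def curryN (Q : Type) : (n : ℕ) → ((Fin n → Q) → Q) → sem Q (onArr n)
  | 0, f => f Fin.elim0
  | n + 1, f => fun q => curryN Q n (fun g => f (Fin.cons q g))

/-- Uncurrying: `⟦o^n → o⟧_Q → (Fin n → Q) → Q`. -/
def uncurryN (Q : Type) : (n : ℕ) → sem Q (onArr n) → (Fin n → Q) → Q
  | 0, x, _ => x
  | n + 1, x, g => uncurryN Q n (x (g 0)) (fun j => g j.succ)

/-- The `i`-th projection `⟦Σ⟧_Q → ⟦o^{n_i} → o⟧_Q`. -/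
def projSem (Q : Type) : (ns : List ℕ) → (i : Fin ns.length) →
    sem Q (SigTy ns) → sem Q (onArr (ns.get i))
  | [], i, _ => i.elim0
  | _ :: _, ⟨0, _⟩, σ => σ.1
  | _ :: ns, ⟨i + 1, h⟩, σ =>
      projSem Q ns ⟨i, Nat.succ_lt_succ_iff.mp h⟩ σ.2

/-- Tupling a family of components into an element of `⟦Σ⟧_B`. -/
def tupleOf (B : Type) : (ns : List ℕ) →
    ((i : Fin ns.length) → sem B (onArr (ns.get i))) → sem B (SigTy ns)
  | [], _ => PUnit.unit
  | _ :: ns, G => (G ⟨0, Nat.succ_pos _⟩, tupleOf B ns (fun i => G i.succ))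

/-- The semantics of the `i`-th generator term
`g_i(t_1,…,t_{n_i}) := λσ. σ.i (t_1 σ) ⋯ (t_{n_i} σ)` of type
`(Σ → o)^{n_i} → (Σ → o)`, seen as an element of `⟦o^{n_i} → o⟧` over the base set
`⟦Σ → o⟧_Q`. -/
def gsem (Q : Type) (ns : List ℕ) (i : Fin ns.length) :
    sem (sem Q (.arr (SigTy ns) .o)) (onArr (ns.get i)) :=
  curryN _ (ns.get i) (fun ts => (fun σ =>
    uncurryN Q (ns.get i) (projSem Q ns i σ) (fun j => ts j σ) : sem Q (.arr (SigTy ns) .o)))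

/-- The interpretation of any simple type at a finite set is finite. -/
instance semFinite (Q : Type) [Finite Q] : ∀ (A : Ty), Finite (sem Q A)
  | .o => ‹Finite Q›
  | .arr A B => by
      haveI := semFinite Q A; haveI := semFinite Q B
      exact Pi.finite
  | .prod A B => by
      haveI := semFinite Q A; haveI := semFinite Q B
      exact Finite.instProd
  | .unit => inferInstanceAs (Finite PUnit.{1})

/-! Instantiate parametricity of `ρ` at the finite base set `B = ⟦Σ → o⟧_Q` and the tuple
`g = (⟦g_1⟧_Q, …, ⟦g_l⟧_Q)` of generators, twice. For `σ ∈ ⟦Σ⟧_Q`, the relation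
`b ~ q :⟺ b σ = q` relates `g` to `σ`, which gives the fixed-point equation
`ρ_Q σ = ρ_B g σ`. The unary relation "`b` is λ-definable" relates `g` to anything,
because the generators preserve definability (`g_i(M_1, …, M_n) = λσ. σ.i (M_1 σ) ⋯ (M_n σ)`),
so `ρ_B g` is λ-definable as well. -/

def Definable (Q : Type) {A : Ty} (x : sem Q A) : Prop :=
  ∃ M : Tm [] A, x = ev0 Q M

namespace Definable

variable {Q : Type}

theorem app {A B : Ty} {f : sem Q (.arr A B)} {x : sem Q A}
    (hf : Definable Q f) (hx : Definable Q x) : Definable Q (f x) := by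
  obtain ⟨M, rfl⟩ := hf
  obtain ⟨N, rfl⟩ := hx
  exact ⟨.app M N, rfl⟩

/-- The combinator `S = λ f g c. f c (g c)`. -/
def sComb (C A B : Ty) : Tm [] (.arr (.arr C (.arr A B)) (.arr (.arr C A) (.arr C B))) :=
  .lam <| .lam <| .lam <|
    .app (.app (.var (.vs (.vs .vz))) (.var .vz)) (.app (.var (.vs .vz)) (.var .vz))

theorem pointwise_app {C A B : Ty} {f : sem Q (.arr C (.arr A B))} {g : sem Q (.arr C A)}
    (hf : Definable Q f) (hg : Definable Q g) :
    Definable Q (A := .arr C B) (fun c => f c (g c)) :=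
  (app (app ⟨sComb C A B, rfl⟩ hf) hg :)

theorem uncurryN {C : Ty} : ∀ (n : ℕ) {h : sem Q (.arr C (onArr n))}
    {fs : Fin n → sem Q (.arr C .o)}, Definable Q h → (∀ j, Definable Q (fs j)) →
    Definable Q (A := .arr C .o) (fun c => uncurryN Q n (h c) (fun j => fs j c))
  | 0, _, _, hh, _ => hh
  | n + 1, _, _, hh, hfs => uncurryN n (pointwise_app hh (hfs 0)) (fun j => hfs j.succ)

end Definable

def projTm : (ns : List ℕ) → (i : Fin ns.length) → {Γ : List Ty} →
    Tm Γ (SigTy ns) → Tm Γ (onArr (ns.get i))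
  | [], i, _, _ => i.elim0
  | _ :: _, ⟨0, _⟩, _, t => .fst t
  | _ :: ns, ⟨i + 1, h⟩, _, t => projTm ns ⟨i, Nat.succ_lt_succ_iff.mp h⟩ (.snd t)

theorem eval_projTm (Q : Type) : ∀ (ns : List ℕ) (i : Fin ns.length) {Γ : List Ty}
    (t : Tm Γ (SigTy ns)) (γ : semCtx Q Γ),
    eval Q (projTm ns i t) γ = projSem Q ns i (eval Q t γ)
  | [], i, _, _, _ => i.elim0
  | _ :: _, ⟨0, _⟩, _, _, _ => rfl
  | _ :: ns, ⟨i + 1, h⟩, _, t, γ =>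
      eval_projTm Q ns ⟨i, Nat.succ_lt_succ_iff.mp h⟩ (.snd t) γ

theorem definable_projSem (Q : Type) (ns : List ℕ) (i : Fin ns.length) :
    Definable Q (A := .arr (SigTy ns) (onArr (ns.get i))) (projSem Q ns i) :=
  ⟨.lam (projTm ns i (.var .vz)), funext fun σ => (eval_projTm Q ns i (.var .vz) (Γ := [_]) (σ, PUnit.unit)).symm⟩

theorem uncurryN_curryN (Q : Type) : ∀ (n : ℕ) (F : (Fin n → Q) → Q) (f : Fin n → Q),
    uncurryN Q n (curryN Q n F) f = F f
  | 0, F, f => congrArg F (funext fun j => j.elim0)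
  | n + 1, F, f => by
      simp only [uncurryN, curryN, uncurryN_curryN Q n]
      exact congrArg F (Fin.cons_self_tail f)

theorem uncurryN_gsem (Q : Type) (ns : List ℕ) (i : Fin ns.length)
    (fs : Fin (ns.get i) → sem Q (.arr (SigTy ns) .o)) :
    uncurryN _ (ns.get i) (gsem Q ns i) fs =
      fun σ => uncurryN Q (ns.get i) (projSem Q ns i σ) (fun j => fs j σ) :=
  uncurryN_curryN _ _ _ _

theorem definable_uncurryN_gsem (Q : Type) (ns : List ℕ) (i : Fin ns.length)
    {fs : Fin (ns.get i) → sem Q (.arr (SigTy ns) .o)} (hfs : ∀ j, Definable Q (fs j)) :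
    Definable Q (uncurryN _ (ns.get i) (gsem Q ns i) fs) := by
  rw [uncurryN_gsem]
  exact Definable.uncurryN _ (definable_projSem Q ns i) hfs

section LogicalRelation

variable {Q Q' : Type} (R : Q → Q' → Prop)

theorem rel_onArr_of_uncurryN : ∀ (n : ℕ) {x : sem Q (onArr n)} {y : sem Q' (onArr n)},
    (∀ (f : Fin n → Q) (g : Fin n → Q'), (∀ j, R (f j) (g j)) →
      R (uncurryN Q n x f) (uncurryN Q' n y g)) →
    rel R (onArr n) x y
  | 0, _, _, h => h Fin.elim0 Fin.elim0 fun j => j.elim0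
  | n + 1, _, _, h => fun a b hab =>
      rel_onArr_of_uncurryN n fun f g hfg =>
        h (Fin.cons a f) (Fin.cons b g) (Fin.cases hab hfg)

theorem rel_tupleOf : ∀ (ns : List ℕ) {G : (i : Fin ns.length) → sem Q (onArr (ns.get i))}
    {σ : sem Q' (SigTy ns)},
    (∀ i, rel R (onArr (ns.get i)) (G i) (projSem Q' ns i σ)) →
    rel R (SigTy ns) (tupleOf Q ns G) σ
  | [], _, _, _ => trivial
  | _ :: ns, _, _, h => ⟨h ⟨0, Nat.succ_pos _⟩, rel_tupleOf ns fun i => h i.succ⟩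

end LogicalRelation

theorem rel_definable_tupleOf_gsem (Q Q' : Type) (ns : List ℕ) (τ : sem Q' (SigTy ns)) :
    rel (fun b (_ : Q') => Definable Q b) (SigTy ns) (tupleOf _ ns (gsem Q ns)) τ :=
  rel_tupleOf _ ns fun i =>
    rel_onArr_of_uncurryN _ _ fun _ _ hfs => definable_uncurryN_gsem Q ns i hfs

theorem rel_apply_tupleOf_gsem (Q : Type) (ns : List ℕ) (σ : sem Q (SigTy ns)) :
    rel (fun b q => b σ = q) (SigTy ns) (tupleOf _ ns (gsem Q ns)) σ :=
  rel_tupleOf _ ns fun i =>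
    rel_onArr_of_uncurryN _ _ fun f g hfg => by
      rw [uncurryN_gsem]
      exact congrArg _ (funext hfg)

/-- every parametric family `ρ` of type
`Σ → o = ((o^{n_1} → o) × ⋯ × (o^{n_l} → o)) → o` has all components λ-definable:
for every finite set `Q` there is a closed term `M : Σ → o` with `ρ_Q = ⟦M⟧_Q`. -/
theorem parametric_family_definable (ns : List ℕ)
    (ρ : ∀ (Q : Type), Finite Q → sem Q (.arr (SigTy ns) .o))
    (hpar : ∀ (Q Q' : Type) (hQ : Finite Q) (hQ' : Finite Q') (R : Q → Q' → Prop),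
      rel R (.arr (SigTy ns) .o) (ρ Q hQ) (ρ Q' hQ')) :
    ∀ (Q : Type) (hQ : Finite Q),
      ∃ M : Tm [] (.arr (SigTy ns) .o), ρ Q hQ = ev0 Q M := by
  intro Q hQ
  let B := sem Q (.arr (SigTy ns) .o)
  have hB : Finite B := semFinite Q _
  let g := tupleOf B ns (gsem Q ns)
  have fixed_point : ρ B hB g = ρ Q hQ :=
    funext fun σ => hpar B Q hB hQ _ g σ (rel_apply_tupleOf_gsem Q ns σ)
  have definable : Definable Q (ρ B hB g) :=
    hpar B B hB hB _ g g (rel_definable_tupleOf_gsem Q B ns g)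
  rwa [fixed_point] at definable
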